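/- arXiv:math/0311490 — 5 statements merged into one kernel-verified Lean document; each statement's English description precedes it below -/
import Mathlib

section
/- For n ≥ 3, the map defined on the generators of the free metabelian group M_n by g_i ↦ [[g_1,g_2]g_n, g_i]·g_i for 1 ≤ i < n and g_n ↦ [g_1,g_2]·g_n extends to a well-defined automorphism α_n of M_n. -/
/-- The free metabelian group of rank `n`: the quotient of the free group on `n` generators
by the second term of its derived series (the second derived subgroup). -/
abbrev FreeMetabelian (n : ℕ) :=
  FreeGroup (Fin n) ⧸ derivedSeries (FreeGroup (Fin n)) 2

instance (n : ℕ) : (derivedSeries (FreeGroup (Fin n)) 2).Normal :=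
  derivedSeries_normal _ _

/-- The generators of the free metabelian group; `gen n i` is the image of the free
generator `g_{i+1}` of the paper (indices are `0`-based). -/
def gen (n : ℕ) (i : Fin n) : FreeMetabelian n :=
  QuotientGroup.mk (FreeGroup.of i)

open scoped commutatorElement

/-!
The automorphism is the transvection `gₙ ↦ [g₁,g₂]·gₙ` of the free group followed by conjugation
by `c = [g₁,g₂]·gₙ`, because `c·gᵢ·c⁻¹ = [c,gᵢ]·gᵢ`. The transvection is invertible, with inverse
`gₙ ↦ [g₁,g₂]⁻¹·gₙ`, since `[g₁,g₂]` is a word in the other generators; and every automorphism of a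
group descends to its quotient by a term of the derived series, which is characteristic.
-/

namespace Subgroup

variable {G : Type*} [Group G]

def Characteristic.quotientMulEquiv (N : Subgroup G) [N.Normal] [hN : N.Characteristic]
    (e : G ≃* G) : G ⧸ N ≃* G ⧸ N :=
  QuotientGroup.congr N N e (characteristic_iff_map_eq.mp hN e)

@[simp]
theorem Characteristic.quotientMulEquiv_mk (N : Subgroup G) [N.Normal] [N.Characteristic]
    (e : G ≃* G) (x : G) :
    Characteristic.quotientMulEquiv N e (x : G ⧸ N) = (e x : G ⧸ N) :=
  QuotientGroup.congr_mk _ _ _ _ x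

theorem commutatorElement_mem {H : Subgroup G} {x y : G} (hx : x ∈ H) (hy : y ∈ H) :
    ⁅x, y⁆ ∈ H := by
  rw [commutatorElement_def]
  exact mul_mem (mul_mem (mul_mem hx hy) (inv_mem hx)) (inv_mem hy)

end Subgroup

namespace FreeGroup

variable {α : Type*} [DecidableEq α]

def transvection (a : α) (w : FreeGroup α) : FreeGroup α →* FreeGroup α :=
  lift (Function.update of a (w * of a))

@[simp]
theorem transvection_of_self (a : α) (w : FreeGroup α) :
    transvection a w (of a) = w * of a := by
  simp [transvection]

@[simp]
theorem transvection_of_ne {a b : α} (h : b ≠ a) (w : FreeGroup α) :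
    transvection a w (of b) = of b := by
  simp [transvection, h]

theorem transvection_apply_of_mem_closure {a : α} {w v : FreeGroup α}
    (hv : v ∈ Subgroup.closure (of '' {a}ᶜ)) : transvection a w v = v := by
  refine MonoidHom.eqOn_closure (f := transvection a w) (g := MonoidHom.id _) ?_ hv
  rintro _ ⟨b, hb, rfl⟩
  exact transvection_of_ne hb w

theorem transvection_comp_transvection {a : α} {w v : FreeGroup α}
    (hw : w ∈ Subgroup.closure (of '' {a}ᶜ)) :
    (transvection a v).comp (transvection a w) = transvection a (w * v) := by
  ext b
  by_cases hb : b = a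
  · subst hb
    simp [transvection_apply_of_mem_closure hw, mul_assoc]
  · simp [hb]

theorem transvection_one (a : α) : transvection a 1 = MonoidHom.id _ := by
  ext b; by_cases hb : b = a <;> simp [hb]

def transvectionEquiv (a : α) (w : FreeGroup α) (hw : w ∈ Subgroup.closure (of '' {a}ᶜ)) :
    FreeGroup α ≃* FreeGroup α :=
  MonoidHom.toMulEquiv (transvection a w) (transvection a w⁻¹)
    (by rw [transvection_comp_transvection hw, mul_inv_cancel, transvection_one])
    (by rw [transvection_comp_transvection (inv_mem hw), inv_mul_cancel, transvection_one])

@[simp]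
theorem transvectionEquiv_apply (a : α) (w : FreeGroup α) (hw) (x : FreeGroup α) :
    transvectionEquiv a w hw x = transvection a w x := rfl

end FreeGroup

theorem MulAut.conj_apply_eq_commutatorElement_mul {G : Type*} [Group G] (c x : G) :
    MulAut.conj c x = ⁅c, x⁆ * x := by
  rw [MulAut.conj_apply, commutatorElement_def]; group

/-- For `n ≥ 3`, the assignment `gᵢ ↦ [[g₁,g₂]gₙ, gᵢ]·gᵢ` for `i < n` and
`gₙ ↦ [g₁,g₂]·gₙ` extends to a (well-defined) automorphism of the free metabelian group. -/
theorem exists_automorphism_alpha (n : ℕ) (hn : 3 ≤ n) :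
    ∃ α : FreeMetabelian n ≃* FreeMetabelian n,
      (∀ i : Fin n, (i : ℕ) < n - 1 →
        α (gen n i) =
          ⁅⁅gen n ⟨0, by omega⟩, gen n ⟨1, by omega⟩⁆ * gen n ⟨n - 1, by omega⟩, gen n i⁆ *
            gen n i) ∧
      α (gen n ⟨n - 1, by omega⟩) =
        ⁅gen n ⟨0, by omega⟩, gen n ⟨1, by omega⟩⁆ * gen n ⟨n - 1, by omega⟩ := by
  set last : Fin n := ⟨n - 1, by omega⟩
  have mem_closure (i : ℕ) (hi : i < n - 1) :
      FreeGroup.of ⟨i, by omega⟩ ∈ Subgroup.closure (FreeGroup.of '' {last}ᶜ) :=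
    Subgroup.subset_closure ⟨_, by simp [last, Fin.ext_iff]; omega, rfl⟩
  have hcomm := Subgroup.commutatorElement_mem (mem_closure 0 (by omega)) (mem_closure 1 (by omega))
  let β := Subgroup.Characteristic.quotientMulEquiv (derivedSeries _ 2)
    (FreeGroup.transvectionEquiv last _ hcomm)
  have hβ_last : β (gen n last) = ⁅gen n ⟨0, by omega⟩, gen n ⟨1, by omega⟩⁆ * gen n last := by
    simp only [β, gen, Subgroup.Characteristic.quotientMulEquiv_mk,
      FreeGroup.transvectionEquiv_apply, FreeGroup.transvection_of_self]
    rfl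
  have hβ_of_ne (i : Fin n) (hi : i ≠ last) : β (gen n i) = gen n i := by
    simp only [β, gen, Subgroup.Characteristic.quotientMulEquiv_mk,
      FreeGroup.transvectionEquiv_apply, FreeGroup.transvection_of_ne hi]
  refine ⟨β.trans (MulAut.conj (β (gen n last))), fun i hi => ?_, ?_⟩
  · rw [MulEquiv.trans_apply, hβ_of_ne i (by simp [last, Fin.ext_iff]; omega), hβ_last,
      MulAut.conj_apply_eq_commutatorElement_mul]
  · rw [MulEquiv.trans_apply, hβ_last, MulAut.conj_apply, mul_inv_cancel_right]
end

section
/- The Magnus representation φ of the free metabelian group M_n, which is the group homomorphism sending each generator g_i to the 2×2 matrix with rows (s_i, t_i) and (0, 1) over the commutative ring ℤ[s_1^{±1},…,s_n^{±1}, t_1,…,t_n], is faithful: φ is injective on M_n. -/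
/-!
Let `a(w) ∈ ℤⁿ` be the exponent sum of a word `w`, `P_a = g₁^{a₁} ⋯ gₙ^{aₙ}`, and read
`Σ fᵢ Xᵢ` with `fᵢ = Σ_a c_{a,i} s^a` as an integral 1-chain on the Cayley graph of `ℤⁿ` (the
coefficient `c_{a,i}` sits on the edge from `a` to `a + eᵢ`). The Magnus matrix of `w` is
`[[s^{a(w)}, Σ fᵢ Xᵢ], [0, 1]]`, and its corner records the edges traversed by the path of `w`.
Send the edge from `a` to `a + eᵢ` to the loop `P_a gᵢ P_{a+eᵢ}⁻¹`, which lies in the derived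
subgroup `M'` of `M = Mₙ`; since `M'` is abelian this extends additively to all chains.
Appending `gᵢ^{±1}` to `w` multiplies `w P_{a(w)}⁻¹` by the loop of the traversed edge and adds
that edge to the corner, so by induction `w P_{a(w)}⁻¹` is the image of the corner. If the
Magnus matrix of `w` is the identity, then `a(w) = 0` and the corner is `0`, hence `w = 1` in `M`.
-/

open MvPolynomial

abbrev LaurentRing (n : ℕ) := AddMonoidAlgebra ℤ (Fin n →₀ ℤ)

noncomputable def sVar (n : ℕ) (i : Fin n) : LaurentRing n :=
  AddMonoidAlgebra.single (Finsupp.single i 1) 1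

noncomputable def sVarInv (n : ℕ) (i : Fin n) : LaurentRing n :=
  AddMonoidAlgebra.single (-Finsupp.single i 1) 1

lemma sVar_mul_sVarInv (n : ℕ) (i : Fin n) : sVar n i * sVarInv n i = 1 := by
  rw [sVar, sVarInv, AddMonoidAlgebra.single_mul_single, add_neg_cancel, one_mul,
    AddMonoidAlgebra.one_def]

abbrev MagnusRing (n : ℕ) := MvPolynomial (Fin n) (LaurentRing n)

noncomputable def magnusUnit (n : ℕ) (i : Fin n) : (Matrix (Fin 2) (Fin 2) (MagnusRing n))ˣ where
  val := !![C (sVar n i), X i; 0, 1]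
  inv := !![C (sVarInv n i), -(C (sVarInv n i) * X i); 0, 1]
  val_inv := by
    have h : (C (sVar n i) * C (sVarInv n i) : MagnusRing n) = 1 := by
      rw [← map_mul, sVar_mul_sVarInv, map_one]
    rw [Matrix.mul_fin_two, Matrix.one_fin_two]
    have e00 : (C (sVar n i) * C (sVarInv n i) + X i * 0 : MagnusRing n) = 1 := by
      linear_combination h
    have e01 : (C (sVar n i) * -(C (sVarInv n i) * X i) + X i * 1 : MagnusRing n) = 0 := by
      linear_combination (-(X i) : MagnusRing n) * h
    rw [e00, e01]
    norm_num
  inv_val := by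
    have h : (C (sVarInv n i) * C (sVar n i) : MagnusRing n) = 1 := by
      rw [← map_mul, mul_comm, sVar_mul_sVarInv, map_one]
    rw [Matrix.mul_fin_two, Matrix.one_fin_two]
    have e00 : (C (sVarInv n i) * C (sVar n i) + -(C (sVarInv n i) * X i) * 0 :
        MagnusRing n) = 1 := by
      linear_combination h
    have e01 : (C (sVarInv n i) * X i + -(C (sVarInv n i) * X i) * 1 : MagnusRing n) = 0 := by
      ring
    rw [e00, e01]
    norm_num

section lowerTriv
open scoped commutatorElement
variable {R : Type*} [CommRing R]

def lowerTriv (R : Type*) [CommRing R] : Subgroup (Matrix (Fin 2) (Fin 2) R)ˣ where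
  carrier := {A | A.val 1 0 = 0 ∧ A.val 1 1 = 1}
  one_mem' := ⟨by simp, by simp⟩
  mul_mem' := by
    rintro A B ⟨ha0, ha1⟩ ⟨hb0, hb1⟩
    constructor <;>
      simp [Units.val_mul, Matrix.mul_apply, Fin.sum_univ_two, ha0, ha1, hb0, hb1]
  inv_mem' := by
    rintro A ⟨h0, h1⟩
    have key : ∀ j, A.inv 1 j = (1 : Matrix (Fin 2) (Fin 2) R) 1 j := by
      intro j
      have h : (A.val * A.inv) 1 j = (1 : Matrix (Fin 2) (Fin 2) R) 1 j := by
        rw [A.val_inv]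
      rwa [Matrix.mul_apply, Fin.sum_univ_two, h0, h1, zero_mul, one_mul, zero_add] at h
    exact ⟨by simpa using key 0, by simpa using key 1⟩

lemma mem_lowerTriv {A : (Matrix (Fin 2) (Fin 2) R)ˣ} :
    A ∈ lowerTriv R ↔ A.val 1 0 = 0 ∧ A.val 1 1 = 1 := Iff.rfl

lemma lowerTriv_mul_apply_zero_zero {A B : (Matrix (Fin 2) (Fin 2) R)ˣ}
    (hB : B ∈ lowerTriv R) :
    (A * B).val 0 0 = A.val 0 0 * B.val 0 0 := by
  obtain ⟨hb0, -⟩ := mem_lowerTriv.mp hB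
  simp [Units.val_mul, Matrix.mul_apply, Fin.sum_univ_two, hb0]

lemma lowerTriv_inv_zero_zero {A : (Matrix (Fin 2) (Fin 2) R)ˣ}
    (hA : A ∈ lowerTriv R) :
    A.val 0 0 * (A⁻¹).val 0 0 = 1 := by
  have h := lowerTriv_mul_apply_zero_zero (A := A) (B := A⁻¹) ((lowerTriv R).inv_mem hA)
  rw [mul_inv_cancel] at h
  simpa using h.symm

def upperUni (R : Type*) [CommRing R] : Subgroup (Matrix (Fin 2) (Fin 2) R)ˣ where
  carrier := {A | A.val 0 0 = 1 ∧ A.val 1 0 = 0 ∧ A.val 1 1 = 1}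
  one_mem' := ⟨by simp, by simp, by simp⟩
  mul_mem' := by
    rintro A B ⟨ha, ha0, ha1⟩ ⟨hb, hb0, hb1⟩
    refine ⟨?_, ?_, ?_⟩ <;>
      simp [Units.val_mul, Matrix.mul_apply, Fin.sum_univ_two, ha, ha0, ha1, hb, hb0, hb1]
  inv_mem' := by
    rintro A ⟨ha, ha0, ha1⟩
    have hmem : A ∈ lowerTriv R := ⟨ha0, ha1⟩
    obtain ⟨h0, h1⟩ := mem_lowerTriv.mp ((lowerTriv R).inv_mem hmem)
    have h := lowerTriv_inv_zero_zero hmem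
    rw [ha, one_mul] at h
    exact ⟨h, h0, h1⟩

lemma mem_upperUni {A : (Matrix (Fin 2) (Fin 2) R)ˣ} :
    A ∈ upperUni R ↔ A.val 0 0 = 1 ∧ A.val 1 0 = 0 ∧ A.val 1 1 = 1 := Iff.rfl

lemma upperUni_comm {A B : (Matrix (Fin 2) (Fin 2) R)ˣ}
    (hA : A ∈ upperUni R) (hB : B ∈ upperUni R) : A * B = B * A := by
  obtain ⟨ha, ha0, ha1⟩ := mem_upperUni.mp hA
  obtain ⟨hb, hb0, hb1⟩ := mem_upperUni.mp hB
  ext : 1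
  rw [Units.val_mul, Units.val_mul, Matrix.eta_fin_two A.val, Matrix.eta_fin_two B.val,
    ha, ha0, ha1, hb, hb0, hb1, Matrix.mul_fin_two, Matrix.mul_fin_two]
  ring_nf

lemma commutator_mem_upperUni {A B : (Matrix (Fin 2) (Fin 2) R)ˣ}
    (hA : A ∈ lowerTriv R) (hB : B ∈ lowerTriv R) : ⁅A, B⁆ ∈ upperUni R := by
  have hAi := (lowerTriv R).inv_mem hA
  have hBi := (lowerTriv R).inv_mem hB
  have hmem : ⁅A, B⁆ ∈ lowerTriv R :=
    Subgroup.mul_mem _ (Subgroup.mul_mem _ (Subgroup.mul_mem _ hA hB) hAi) hBi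
  obtain ⟨hc0, hc1⟩ := mem_lowerTriv.mp hmem
  refine mem_upperUni.mpr ⟨?_, hc0, hc1⟩
  show (A * B * A⁻¹ * B⁻¹).val 0 0 = 1
  rw [lowerTriv_mul_apply_zero_zero hBi, lowerTriv_mul_apply_zero_zero hAi,
    lowerTriv_mul_apply_zero_zero hB]
  have h1 := lowerTriv_inv_zero_zero hA
  have h2 := lowerTriv_inv_zero_zero hB
  calc A.val 0 0 * B.val 0 0 * (A⁻¹).val 0 0 * (B⁻¹).val 0 0
      = (A.val 0 0 * (A⁻¹).val 0 0) * (B.val 0 0 * (B⁻¹).val 0 0) := by ring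
    _ = 1 := by rw [h1, h2, one_mul]

lemma derivedSeries_two_map_eq_one {G : Type*} [Group G]
    (f : G →* (Matrix (Fin 2) (Fin 2) R)ˣ) (hf : ∀ g, f g ∈ lowerTriv R) :
    ∀ x ∈ derivedSeries G 2, f x = 1 := by
  have h1 : derivedSeries G 1 ≤ (upperUni R).comap f := by
    have e : derivedSeries G 1 = ⁅derivedSeries G 0, derivedSeries G 0⁆ :=
      derivedSeries_succ G 0
    rw [e, Subgroup.commutator_le]
    intro g _ h _
    simp only [Subgroup.mem_comap, map_commutatorElement]
    exact commutator_mem_upperUni (hf g) (hf h)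
  have h2 : derivedSeries G 2 ≤ f.ker := by
    have e : derivedSeries G 2 = ⁅derivedSeries G 1, derivedSeries G 1⁆ :=
      derivedSeries_succ G 1
    rw [e, Subgroup.commutator_le]
    intro g hg h hh
    rw [MonoidHom.mem_ker, map_commutatorElement, commutatorElement_eq_one_iff_mul_comm]
    exact upperUni_comm (h1 hg) (h1 hh)
  exact fun x hx => h2 hx

end lowerTriv

/-- The Magnus representation on the free group. -/
noncomputable def magnusFree (n : ℕ) :
    FreeGroup (Fin n) →* (Matrix (Fin 2) (Fin 2) (MagnusRing n))ˣ :=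
  FreeGroup.lift (magnusUnit n)

lemma magnusFree_mem_lowerTriv (n : ℕ) (g : FreeGroup (Fin n)) :
    magnusFree n g ∈ lowerTriv (MagnusRing n) := by
  refine FreeGroup.range_lift_le (s := lowerTriv (MagnusRing n)) ?_ ⟨g, rfl⟩
  rintro A ⟨i, rfl⟩
  exact ⟨by simp [magnusUnit], by simp [magnusUnit]⟩

/-- The Magnus representation of the free metabelian group. -/
noncomputable def Magnus (n : ℕ) :
    FreeMetabelian n →* (Matrix (Fin 2) (Fin 2) (MagnusRing n))ˣ :=
  QuotientGroup.lift (derivedSeries (FreeGroup (Fin n)) 2) (magnusFree n)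
    (derivedSeries_two_map_eq_one (magnusFree n) (magnusFree_mem_lowerTriv n))

/-- The Laurent monomial `s₁^{j₁} ⋯ sₙ^{jₙ}` with exponent vector `j`. -/
noncomputable def sMonomial (n : ℕ) (j : Fin n →₀ ℤ) : LaurentRing n :=
  AddMonoidAlgebra.single j 1

open scoped IsMulCommutative

section Metabelian

variable {G : Type*} [Group G]

lemma derivedSeries_quotient_derivedSeries (k : ℕ) :
    derivedSeries (G ⧸ derivedSeries G k) k = ⊥ := by
  rw [← map_derivedSeries_eq (QuotientGroup.mk'_surjective _), QuotientGroup.map_mk'_self]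

lemma isMulCommutative_commutator_of_derivedSeries_two_eq_bot (h : derivedSeries G 2 = ⊥) :
    IsMulCommutative (commutator G) := by
  rwa [← Subgroup.le_centralizer_iff_isMulCommutative,
    ← Subgroup.commutator_eq_bot_iff_le_centralizer, ← derivedSeries_one, ← derivedSeries_succ]

end Metabelian

instance (n : ℕ) : IsMulCommutative (commutator (FreeMetabelian n)) :=
  isMulCommutative_commutator_of_derivedSeries_two_eq_bot (derivedSeries_quotient_derivedSeries 2)

section OrderedZPow

variable {G : Type*} [Group G] {n : ℕ}

def orderedZPow (g : Fin n → G) (a : Fin n →₀ ℤ) : G :=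
  (List.ofFn fun j => g j ^ a j).prod

lemma orderedZPow_zero (g : Fin n → G) : orderedZPow g 0 = 1 := by
  simp [orderedZPow]

lemma map_orderedZPow {H : Type*} [CommGroup H] (f : G →* H) (g : Fin n → G) (a : Fin n →₀ ℤ) :
    f (orderedZPow g a) = ∏ j, f (g j) ^ a j := by
  simp [orderedZPow, map_list_prod, List.map_ofFn, List.prod_ofFn]

lemma prod_zpow_add_single {H : Type*} [CommGroup H] (x : Fin n → H) (a : Fin n →₀ ℤ)
    (i : Fin n) : ∏ j, x j ^ (a + Finsupp.single i (1 : ℤ)) j = (∏ j, x j ^ a j) * x i := by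
  simp only [Finsupp.coe_add, Pi.add_apply, zpow_add, Finset.prod_mul_distrib]
  congr 1
  rw [Finset.prod_eq_single i] <;> simp_all

lemma orderedZPow_mul_mul_inv_mem_commutator (g : Fin n → G) (a : Fin n →₀ ℤ) (i : Fin n) :
    orderedZPow g a * g i * (orderedZPow g (a + Finsupp.single i (1 : ℤ)))⁻¹ ∈ commutator G := by
  rw [← Abelianization.ker_of, MonoidHom.mem_ker, map_mul, map_mul, map_inv, map_orderedZPow,
    map_orderedZPow, prod_zpow_add_single, mul_inv_cancel]

end OrderedZPow

section AffineMatrix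

variable {R : Type*} [CommRing R] (A : Matrix (Fin 2) (Fin 2) R) (c x : R)

lemma mul_affine_apply_zero_zero : (A * !![c, x; 0, 1]) 0 0 = A 0 0 * c := by
  simp [Matrix.mul_apply]

lemma mul_affine_apply_zero_one : (A * !![c, x; 0, 1]) 0 1 = A 0 1 + A 0 0 * x := by
  simp [Matrix.mul_apply, add_comm]

end AffineMatrix

section MagnusEmbedding

variable (n : ℕ)

lemma sMonomial_zero : sMonomial n 0 = 1 := rfl

lemma sMonomial_add (a b : Fin n →₀ ℤ) :
    sMonomial n (a + b) = sMonomial n a * sMonomial n b := by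
  rw [sMonomial, sMonomial, sMonomial, AddMonoidAlgebra.single_mul_single, one_mul]

lemma sMonomial_injective : Function.Injective (sMonomial n) :=
  AddMonoidAlgebra.single_left_injective one_ne_zero

lemma mk_of_eq_gen (i : Fin n) :
    ((FreeGroup.of i : FreeGroup (Fin n)) : FreeMetabelian n) = gen n i :=
  rfl

noncomputable def edgeLoop (a : Fin n →₀ ℤ) (i : Fin n) : commutator (FreeMetabelian n) :=
  ⟨_, orderedZPow_mul_mul_inv_mem_commutator (gen n) a i⟩

lemma coe_edgeLoop (a : Fin n →₀ ℤ) (i : Fin n) :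
    (edgeLoop n a i : FreeMetabelian n)
      = orderedZPow (gen n) a * gen n i * (orderedZPow (gen n) (a + Finsupp.single i 1))⁻¹ :=
  rfl

noncomputable def edgeLoopCoeffHom (i : Fin n) :
    LaurentRing n →+ Additive (commutator (FreeMetabelian n)) :=
  (Finsupp.liftAddHom fun a => zmultiplesHom _ (Additive.ofMul (edgeLoop n a i))).comp
    AddMonoidAlgebra.coeffAddEquiv.toAddMonoidHom

noncomputable def edgeLoopHom : MagnusRing n →+ Additive (commutator (FreeMetabelian n)) :=
  ∑ i, (edgeLoopCoeffHom n i).comp (coeffAddMonoidHom (Finsupp.single i 1))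

lemma edgeLoopHom_C_sMonomial_mul_X (a : Fin n →₀ ℤ) (i : Fin n) :
    edgeLoopHom n (C (sMonomial n a) * X i) = Additive.ofMul (edgeLoop n a i) := by
  rw [edgeLoopHom, AddMonoidHom.finsetSum_apply, Finset.sum_eq_single i]
  · simp [edgeLoopCoeffHom, sMonomial]
  · intro j _ hji
    have : Finsupp.single i 1 ≠ Finsupp.single j 1 :=
      (Finsupp.single_left_injective one_ne_zero).ne hji.symm
    simp [coeff_X, this]
  · simp

lemma magnusFree_mul_of (u : FreeGroup (Fin n)) (i : Fin n) :
    (magnusFree n (u * FreeGroup.of i)).val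
      = (magnusFree n u).val * !![C (sMonomial n (Finsupp.single i 1)), X i; 0, 1] := by
  rw [map_mul, Units.val_mul, magnusFree, FreeGroup.lift_apply_of]
  rfl

lemma magnusFree_mul_of_inv (u : FreeGroup (Fin n)) (i : Fin n) :
    (magnusFree n (u * (FreeGroup.of i)⁻¹)).val
      = (magnusFree n u).val
        * !![C (sMonomial n (-Finsupp.single i 1)), -(C (sMonomial n (-Finsupp.single i 1)) * X i);
          0, 1] := by
  rw [map_mul, map_inv, Units.val_mul, magnusFree, FreeGroup.lift_apply_of]
  rfl

lemma exists_mk_mul_inv_eq_edgeLoopHom (w : FreeGroup (Fin n)) :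
    ∃ a : Fin n →₀ ℤ, (magnusFree n w).val 0 0 = C (sMonomial n a) ∧
      (w : FreeMetabelian n) * (orderedZPow (gen n) a)⁻¹
        = ((Additive.toMul (edgeLoopHom n ((magnusFree n w).val 0 1)) :
            commutator (FreeMetabelian n)) : FreeMetabelian n) := by
  have hw : w ∈ Subgroup.closure (Set.range FreeGroup.of) := by
    rw [FreeGroup.closure_range_of]; trivial
  induction hw using Subgroup.closure_induction_right with
  | one =>
    refine ⟨0, ?_, ?_⟩
    · rw [map_one, Units.val_one, Matrix.one_apply_eq, sMonomial_zero, map_one]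
    · rw [map_one, Units.val_one, Matrix.one_apply_ne zero_ne_one, map_zero, toMul_zero,
        orderedZPow_zero, inv_one, mul_one]
      rfl
  | mul_right u _ _ hi ih =>
    obtain ⟨i, rfl⟩ := hi
    obtain ⟨a, h00, h01⟩ := ih
    refine ⟨a + Finsupp.single i 1, ?_, ?_⟩
    · rw [magnusFree_mul_of, mul_affine_apply_zero_zero, h00, ← map_mul, ← sMonomial_add]
    · rw [magnusFree_mul_of, mul_affine_apply_zero_one, h00, map_add,
        edgeLoopHom_C_sMonomial_mul_X, toMul_add, Subgroup.coe_mul, ← h01, toMul_ofMul,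
        coe_edgeLoop, QuotientGroup.mk_mul, mk_of_eq_gen]
      group
  | mul_inv_cancel u _ _ hi ih =>
    obtain ⟨i, rfl⟩ := hi
    obtain ⟨a, h00, h01⟩ := ih
    refine ⟨a - Finsupp.single i 1, ?_, ?_⟩
    · rw [magnusFree_mul_of_inv, mul_affine_apply_zero_zero, h00, ← map_mul, ← sMonomial_add,
        sub_eq_add_neg]
    · have hX : C (sMonomial n a) * -(C (sMonomial n (-Finsupp.single i 1)) * X i)
          = -(C (sMonomial n (a - Finsupp.single i 1)) * X i) := by
        rw [sub_eq_add_neg, sMonomial_add, map_mul]; ring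
      rw [magnusFree_mul_of_inv, mul_affine_apply_zero_one, h00, hX, ← sub_eq_add_neg, map_sub,
        edgeLoopHom_C_sMonomial_mul_X, toMul_sub, Subgroup.coe_div, ← h01, toMul_ofMul,
        coe_edgeLoop, sub_add_cancel, QuotientGroup.mk_mul, QuotientGroup.mk_inv, mk_of_eq_gen]
      simp only [div_eq_mul_inv, mul_inv_rev, inv_inv, mul_assoc, inv_mul_cancel_left]

lemma mk_eq_one_of_magnusFree_eq_one {w : FreeGroup (Fin n)} (h : magnusFree n w = 1) :
    (w : FreeMetabelian n) = 1 := by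
  obtain ⟨a, h00, hw⟩ := exists_mk_mul_inv_eq_edgeLoopHom n w
  rw [h, Units.val_one, Matrix.one_apply_eq, ← map_one C, ← sMonomial_zero n] at h00
  rw [← sMonomial_injective n (C_injective _ _ h00), h, Units.val_one,
    Matrix.one_apply_ne zero_ne_one, map_zero, toMul_zero, orderedZPow_zero, inv_one,
    mul_one] at hw
  exact hw

end MagnusEmbedding

/-- The Magnus representation of the free metabelian group is faithful. -/
theorem magnus_representation_faithful (n : ℕ) :
    Function.Injective (Magnus n) := by
  rw [injective_iff_map_eq_one]
  intro q hq
  obtain ⟨w, rfl⟩ := QuotientGroup.mk_surjective q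
  exact mk_eq_one_of_magnusFree_eq_one n hq
end

section
/- Every element in the image of the Magnus representation φ of the free metabelian group M_n is a matrix of the form [[S, Σ_i γ_i t_i],[0,1]], where S = s_1^{j_1}⋯s_n^{j_n} is a Laurent monomial with integer exponents and γ_1,…,γ_n are elements of the Laurent polynomial ring ℤ[s_1^{±1},…,s_n^{±1}] satisfying Σ_i γ_i(1 − s_i) = 1 − S. -/
/-!
The matrices `[[S, Σᵢ γᵢ tᵢ], [0, 1]]` with `S` a monomial and `Σᵢ γᵢ (1 - sᵢ) = 1 - S` form a
subgroup: the product of the pairs `(S, γ)` and `(S', γ')` is `(S S', S γ' + γ)`, and since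
`γ ↦ Σᵢ γᵢ (1 - sᵢ)` is linear the relation passes to products and inverses. Each generator
`φ(gᵢ)` has this form with `S = sᵢ` and `γ = eᵢ`, so the whole image of `φ` lies in the subgroup.
-/

open MvPolynomial

section MagnusForm

variable {K : Type*} [CommRing K] {σ : Type*} [Fintype σ]

noncomputable def magnusMatrix (u : K) (γ : σ → K) : Matrix (Fin 2) (Fin 2) (MvPolynomial σ K) :=
  !![C u, ∑ i, C (γ i) * X i; 0, 1]

lemma magnusMatrix_mul (u v : K) (γ δ : σ → K) :
    magnusMatrix u γ * magnusMatrix v δ = magnusMatrix (u * v) (u • δ + γ) := by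
  simp [magnusMatrix, Finset.mul_sum, ← Finset.sum_add_distrib, add_mul, mul_assoc]

lemma magnusMatrix_one : magnusMatrix (1 : K) (0 : σ → K) = 1 := by
  simp [magnusMatrix, Matrix.one_fin_two]

lemma magnusMatrix_mul_eq_one {u v : K} (huv : u * v = 1) (γ : σ → K) :
    magnusMatrix u γ * magnusMatrix v (-(v • γ)) = 1 := by
  rw [magnusMatrix_mul, huv, smul_neg, smul_smul, huv, one_smul, neg_add_cancel, magnusMatrix_one]

lemma magnusMatrix_single [DecidableEq σ] (u : K) (i : σ) (c : K) :
    magnusMatrix u (Pi.single i c) = !![C u, C c * X i; 0, 1] := by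
  simp [magnusMatrix, Pi.single_apply, apply_ite C, ite_mul]

-- The relation is the fundamental formula of Fox calculus, `γᵢ` being the abelianized Fox
-- derivatives of a word with image `S` in the abelianization.
noncomputable def magnusFormSubgroup {G : Type*} [Group G] (μ : G →* K) (s : σ → K) :
    Subgroup (Matrix (Fin 2) (Fin 2) (MvPolynomial σ K))ˣ where
  carrier := {A | ∃ g γ, (A : Matrix (Fin 2) (Fin 2) (MvPolynomial σ K)) = magnusMatrix (μ g) γ ∧
    Fintype.linearCombination K (fun i => 1 - s i) γ = 1 - μ g}
  one_mem' := ⟨1, 0, by simp [magnusMatrix_one], by simp⟩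
  mul_mem' := by
    rintro A B ⟨g, γ, hA, hγ⟩ ⟨h, δ, hB, hδ⟩
    refine ⟨g * h, μ g • δ + γ, by rw [Units.val_mul, hA, hB, magnusMatrix_mul, map_mul], ?_⟩
    rw [map_add, map_smul, hγ, hδ, smul_eq_mul, map_mul]
    ring
  inv_mem' := by
    rintro A ⟨g, γ, hA, hγ⟩
    have hμ : μ g * μ g⁻¹ = 1 := by rw [← map_mul, mul_inv_cancel, map_one]
    refine ⟨g⁻¹, -(μ g⁻¹ • γ), Units.inv_eq_of_mul_eq_one_right ?_, ?_⟩
    · rw [hA, magnusMatrix_mul_eq_one hμ]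
    · rw [map_neg, map_smul, hγ, smul_eq_mul]
      linear_combination hμ

end MagnusForm

lemma magnusUnit_mem_magnusFormSubgroup (n : ℕ) (i : Fin n) :
    magnusUnit n i ∈ magnusFormSubgroup (AddMonoidAlgebra.of ℤ (Fin n →₀ ℤ)) (sVar n) :=
  ⟨Multiplicative.ofAdd (Finsupp.single i 1), Pi.single i 1,
    by rw [magnusMatrix_single, map_one, one_mul]; rfl,
    by rw [Fintype.linearCombination_apply_single, one_smul]; rfl⟩

lemma magnusFree_mem_magnusFormSubgroup (n : ℕ) (x : FreeGroup (Fin n)) :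
    magnusFree n x ∈ magnusFormSubgroup (AddMonoidAlgebra.of ℤ (Fin n →₀ ℤ)) (sVar n) :=
  FreeGroup.range_lift_le (by rintro _ ⟨i, rfl⟩; exact magnusUnit_mem_magnusFormSubgroup n i)
    ⟨x, rfl⟩

/-- Every element in the image of the Magnus representation is a matrix of the form
`[[S, Σᵢ γᵢ tᵢ], [0, 1]]`, with `S` a Laurent monomial in the `sᵢ` and the `γᵢ` Laurent
polynomials in the `sᵢ` satisfying `Σᵢ γᵢ (1 - sᵢ) = 1 - S`. -/
theorem magnus_image_form (n : ℕ) (g : FreeMetabelian n) :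
    ∃ (j : Fin n →₀ ℤ) (γ : Fin n → LaurentRing n),
      (Magnus n g : Matrix (Fin 2) (Fin 2) (MagnusRing n)) =
        !![C (sMonomial n j), ∑ i : Fin n, C (γ i) * X i; 0, 1] ∧
      ∑ i : Fin n, γ i * (1 - sVar n i) = 1 - sMonomial n j := by
  induction g using QuotientGroup.induction_on with
  | H x =>
    obtain ⟨j, γ, hA, hγ⟩ := magnusFree_mem_magnusFormSubgroup n x
    exact ⟨Multiplicative.toAdd j, γ, hA, hγ⟩
end

section
/- Let α be an endomorphism of the free metabelian group M_n that induces the identity on the abelianization of M_n (an IA-endomorphism). Then there exist elements α_{i,j} (1 ≤ i,j ≤ n) of the Laurent polynomial ring ℤ[s_1^{±1},…,s_n^{±1}] such that for all g ∈ M_n, φ(α(g)) = ᾱ(φ(g)), where ᾱ is the ring endomorphism of R = ℤ[s_1^{±1},…,s_n^{±1}, t_1,…,t_n] defined by ᾱ(t_i) = Σ_j α_{i,j} t_j and ᾱ(s_i) = s_i, applied entrywise to the matrix φ(g). -/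
/-! Every Magnus matrix has the shape `[[u, Σⱼ cⱼ tⱼ], [0, 1]]` with `u` a unit and `cⱼ` Laurent
polynomials, and its `(0,0)` entry is a homomorphism into an abelian group, so an
IA-endomorphism `α` does not change it. Hence `φ (α gᵢ) = [[sᵢ, Σⱼ αᵢⱼ tⱼ], [0, 1]] = ᾱ (φ gᵢ)`
for suitable `αᵢⱼ`, and the homomorphisms `g ↦ φ (α g)` and `g ↦ ᾱ (φ g)`, agreeing on
generators, agree everywhere. -/

open MvPolynomial

/-- The ring endomorphism `ᾱ` of `R = ℤ[s^{±1}, t]` fixing the Laurent coefficients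
(hence each `sᵢ`) and sending `tᵢ` to `Σⱼ a i j • tⱼ`. -/
noncomputable def barHom (n : ℕ) (a : Fin n → Fin n → LaurentRing n) :
    MagnusRing n →+* MagnusRing n :=
  (MvPolynomial.aeval (R := LaurentRing n) fun i : Fin n =>
    ∑ j : Fin n, C (a i j) * X j : MagnusRing n →ₐ[LaurentRing n] MagnusRing n).toRingHom

section affine

variable (R A : Type*) [CommRing R] [CommRing A] [Algebra R A]

def affineSubgroup (N : Submodule R A) : Subgroup (Matrix (Fin 2) (Fin 2) A)ˣ where
  carrier := {M | ∃ u : Rˣ, ∃ v ∈ N, M.val = !![algebraMap R A u, v; 0, 1]}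
  one_mem' := ⟨1, 0, N.zero_mem, by simp [Matrix.one_fin_two]⟩
  mul_mem' := by
    rintro M M' ⟨u, v, hv, hM⟩ ⟨u', v', hv', hM'⟩
    refine ⟨u * u', (u : R) • v' + v, N.add_mem (N.smul_mem _ hv') hv, ?_⟩
    rw [Units.val_mul, hM, hM', Matrix.mul_fin_two, Algebra.smul_def]
    simp
  inv_mem' := by
    rintro M ⟨u, v, hv, hM⟩
    refine ⟨u⁻¹, -((↑u⁻¹ : R) • v), N.neg_mem (N.smul_mem _ hv),
      Units.inv_eq_of_mul_eq_one_right ?_⟩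
    have hu : algebraMap R A u * algebraMap R A ↑u⁻¹ = 1 := by
      rw [← map_mul, Units.mul_inv, map_one]
    rw [hM, Matrix.mul_fin_two, Matrix.one_fin_two, Algebra.smul_def, mul_neg, ← mul_assoc, hu]
    simp

end affine

section lowerTriv

variable {R : Type*} [CommRing R]

def lowerTrivTopLeft : lowerTriv R →* R where
  toFun A := (A : (Matrix (Fin 2) (Fin 2) R)ˣ).val 0 0
  map_one' := by simp
  map_mul' _ B := lowerTriv_mul_apply_zero_zero B.2

lemma val_zero_zero_eq_of_abelianization_eq {G : Type*} [Group G]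
    (f : G →* (Matrix (Fin 2) (Fin 2) R)ˣ) (hf : ∀ g, f g ∈ lowerTriv R) {g h : G}
    (hgh : Abelianization.of g = Abelianization.of h) :
    (f g).val 0 0 = (f h).val 0 0 := by
  let d : G →* Rˣ := (lowerTrivTopLeft.comp (f.codRestrict _ hf)).toHomUnits
  have hd := congrArg Units.val (congrArg (Abelianization.lift d) hgh)
  rwa [Abelianization.lift_apply_of, Abelianization.lift_apply_of] at hd

end lowerTriv

section Magnus

variable {n : ℕ}

lemma FreeMetabelian.hom_ext {H : Type*} [Group H] {f f' : FreeMetabelian n →* H}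
    (h : ∀ i, f (gen n i) = f' (gen n i)) : f = f' :=
  QuotientGroup.monoidHom_ext _ (FreeGroup.ext_hom _ _ h)

lemma Magnus_gen (i : Fin n) : Magnus n (gen n i) = magnusUnit n i :=
  FreeGroup.lift_apply_of

lemma Magnus_mem_lowerTriv (g : FreeMetabelian n) : Magnus n g ∈ lowerTriv (MagnusRing n) :=
  QuotientGroup.induction_on g (magnusFree_mem_lowerTriv n)

lemma Magnus_mem_affineSubgroup (g : FreeMetabelian n) :
    Magnus n g ∈ affineSubgroup (LaurentRing n) (MagnusRing n)
      (Submodule.span (LaurentRing n) (Set.range X)) := by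
  refine QuotientGroup.induction_on g fun w => FreeGroup.range_lift_le ?_ ⟨w, rfl⟩
  rintro _ ⟨i, rfl⟩
  exact ⟨Units.mkOfMulEqOne _ _ (sVar_mul_sVarInv n i), X i, Submodule.subset_span ⟨i, rfl⟩,
    by simp [magnusUnit]⟩

lemma exists_Magnus_apply_gen_eq_of_IA (α : FreeMetabelian n →* FreeMetabelian n)
    (hIA : ∀ g : FreeMetabelian n, Abelianization.of (α g) = Abelianization.of g) (i : Fin n) :
    ∃ c : Fin n → LaurentRing n,
      (Magnus n (α (gen n i))).val = !![C (sVar n i), ∑ j, c j • X j; 0, 1] := by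
  obtain ⟨u, v, hv, hM⟩ := Magnus_mem_affineSubgroup (α (gen n i))
  obtain ⟨c, rfl⟩ := (Submodule.mem_span_range_iff_exists_fun _).mp hv
  have h00 : (u : LaurentRing n) = sVar n i := by
    simpa [hM, Magnus_gen, magnusUnit] using
      val_zero_zero_eq_of_abelianization_eq (Magnus n) Magnus_mem_lowerTriv (hIA (gen n i))
  exact ⟨c, by rw [hM, h00, MvPolynomial.algebraMap_eq]⟩

lemma magnusUnit_map_barHom (a : Fin n → Fin n → LaurentRing n) (i : Fin n) :
    (magnusUnit n i).val.map (barHom n a) = !![C (sVar n i), ∑ j, a i j • X j; 0, 1] := by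
  rw [Matrix.eta_fin_two ((magnusUnit n i).val.map (barHom n a))]
  simp [magnusUnit, barHom, smul_eq_C_mul]

end Magnus

/-- For every IA-endomorphism `α` of the free metabelian group there are Laurent
polynomials `α_{i,j}` such that `φ (α g) = ᾱ (φ g)` (applied entrywise), where `ᾱ` fixes
the `sᵢ` and sends `tᵢ` to `Σⱼ α_{i,j} tⱼ`. -/
theorem IA_endomorphism_magnus_matrix (n : ℕ) (α : FreeMetabelian n →* FreeMetabelian n)
    (hIA : ∀ g : FreeMetabelian n, Abelianization.of (α g) = Abelianization.of g) :
    ∃ a : Fin n → Fin n → LaurentRing n,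
      ∀ g : FreeMetabelian n,
        (Magnus n (α g) : Matrix (Fin 2) (Fin 2) (MagnusRing n)) =
          (Magnus n g : Matrix (Fin 2) (Fin 2) (MagnusRing n)).map (barHom n a) := by
  choose a ha using exists_Magnus_apply_gen_eq_of_IA α hIA
  refine ⟨a, fun g => ?_⟩
  have hext : (Magnus n).comp α =
      (Units.map (barHom n a).mapMatrix.toMonoidHom).comp (Magnus n) :=
    FreeMetabelian.hom_ext fun i => Units.ext <| by
      simp [ha, Magnus_gen, magnusUnit_map_barHom]
  exact congrArg Units.val (DFunLike.congr_fun hext g)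
end

section
/- Let S = s_1^{j_1}⋯s_n^{j_n} be a Laurent monomial with integer exponents in the Laurent polynomial ring ℤ[s_1^{±1},…,s_n^{±1}] (n ≥ 1), and let A be an element of this ring. If 1 − S = (1 − s_n)^2 · A, then S = 1 and A = 0. -/
open MvPolynomial

/-! For an additive map `φ : G →+ k`, sending `single g c` to `c • (1 + φ g • ε)` is a ring map
into the dual numbers `k[ε]`, and it kills the square of the augmentation ideal. Applied to
`1 - S = (1 - sₙ)² A` with `φ` the `i`-th exponent, it gives `jᵢ ε = 0`; hence `S = 1`, and then
`A = 0` because the Laurent polynomial ring is a domain. -/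

open DualNumber

namespace AddMonoidAlgebra

variable {k G : Type*} [CommRing k] [AddMonoid G]

noncomputable def toDualNumber (φ : G →+ k) : AddMonoidAlgebra k G →ₐ[k] DualNumber k :=
  lift k (DualNumber k) G
    { toFun := fun g => 1 + φ g.toAdd • ε
      map_one' := by simp
      map_mul' := fun g h => by
        simp only [toAdd_mul, map_add, add_smul, mul_add, mul_one, Algebra.mul_smul_comm,
          add_mul, one_mul, Algebra.smul_mul_assoc, eps_mul_eps, smul_zero, add_zero]
        abel }

theorem toDualNumber_single_one (φ : G →+ k) (g : G) :
    toDualNumber φ (single g 1) = 1 + φ g • ε := by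
  simp [toDualNumber]

theorem apply_eq_zero_of_one_sub_single_eq_sq_mul (φ : G →+ k) {g h : G}
    {A : AddMonoidAlgebra k G} (hA : 1 - single g 1 = (1 - single h 1) ^ 2 * A) :
    φ g = 0 := by
  have hε := congrArg (fun x => (toDualNumber φ x).snd) hA
  simpa [toDualNumber_single_one, sq, smul_mul_smul_comm, eps_mul_eps] using hε

theorem one_sub_single_ne_zero [Nontrivial k] {g : G} (hg : g ≠ 0) :
    (1 - single g 1 : AddMonoidAlgebra k G) ≠ 0 := by
  rw [sub_ne_zero, one_def, Ne, single_left_inj one_ne_zero]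
  exact hg.symm

end AddMonoidAlgebra

/-- If `S` is a Laurent monomial and `1 - S = (1 - sₙ)² A` in the Laurent polynomial
ring, then `S = 1` and `A = 0`. -/
theorem monomial_eq_one_of_eq_sq_mul (n : ℕ) (hn : 1 ≤ n) (j : Fin n →₀ ℤ)
    (A : LaurentRing n)
    (h : 1 - sMonomial n j = (1 - sVar n ⟨n - 1, by omega⟩) ^ 2 * A) :
    sMonomial n j = 1 ∧ A = 0 := by
  have hj : j = 0 := by
    ext i
    exact AddMonoidAlgebra.apply_eq_zero_of_one_sub_single_eq_sq_mul (Finsupp.applyAddHom i) h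
  have hS : sMonomial n j = 1 := by
    rw [hj, sMonomial, AddMonoidAlgebra.one_def]
  refine ⟨hS, ?_⟩
  rw [hS, sub_self, eq_comm, mul_eq_zero] at h
  exact h.resolve_left <| pow_ne_zero 2 <|
    AddMonoidAlgebra.one_sub_single_ne_zero (Finsupp.single_ne_zero.2 one_ne_zero)
end
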